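/- Universal approximation for NO-CTR (abstract form): Let 𝒳 ∈ C([0,1]^N) and ε > 0. Suppose (a) there exists 𝒢 ∈ C([0,1]^N) expressible in a dense family (e.g., finite sums Σ_k a_k σ(w_kᵀy + b_k) with σ continuous discriminatory) with ‖𝒳 − 𝒢‖_∞ < ε/2 and ‖𝒢‖_∞ ≤ M, and (b) for any δ > 0 there exist operators F₁,…,F_N : C([0,1]) → C([0,1]) with ‖F_n(u) − u‖_∞ ≤ δ for all u in the relevant compact set of fiber functions. Then choosing δ = ε/((2^{N+1} − 2)M), the composition 𝓕_N⁽ᴺ⁾ ∘ ⋯ ∘ 𝓕₁⁽¹⁾(𝒢) of induced mode-n operators satisfies ‖𝒳 − 𝓕_N⁽ᴺ⁾ ∘ ⋯ ∘ 𝓕₁⁽¹⁾(𝒢)‖_∞ < ε, provided each ‖𝓕_n⁽ⁿ⁾‖ ≤ 2. -/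

import Mathlib

open unitInterval Classical

/-- The mode-n univariate fiber function of `X ∈ C([0,1]^N, ℝ)` at `y`:
`t ↦ X(y₁,…,y_{n-1},t,y_{n+1},…,y_N)`, an element of `C([0,1], ℝ)`. -/
def fiber {N : ℕ} (X : C((Fin N → I), ℝ)) (n : Fin N) (y : Fin N → I) :
    C(I, ℝ) :=
  ⟨fun t => X (Function.update y n t), by
    apply X.continuous.comp
    apply continuous_pi
    intro k
    by_cases h : k = n
    · subst h
      simp only [Function.update_self]
      exact continuous_id
    · simp only [Function.update_of_ne h]
      exact continuous_const⟩

/-- The mode-n operator on `C([0,1]^N, ℝ)` induced by `F : C([0,1]) → C([0,1])`: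
`𝓕⁽ⁿ⁾(X)(y₁,…,y_N) = F(X(y₁,…,y_{n-1},·,y_{n+1},…,y_N))(y_n)`.
(When the resulting function fails to be continuous — which never happens for
the operators considered here — a junk value `0` is returned.) -/

noncomputable def modeLift {N : ℕ} (F : C(I, ℝ) → C(I, ℝ)) (n : Fin N)
    (X : C((Fin N → I), ℝ)) : C((Fin N → I), ℝ) :=
  if h : Continuous (fun y => F (fiber X n y) (y n)) then ⟨_, h⟩ else 0

/-- `liftSeq F m = 𝓕ₘ⁽ᵐ⁾ ∘ ⋯ ∘ 𝓕₂⁽²⁾ ∘ 𝓕₁⁽¹⁾`, the composition of the induced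
mode-n operators (mode 1 applied first). -/
noncomputable def liftSeq {N : ℕ} (F : Fin N → (C(I, ℝ) → C(I, ℝ))) :
    ℕ → C((Fin N → I), ℝ) → C((Fin N → I), ℝ)
  | 0 => id
  | m + 1 => fun X =>
      if h : m < N then modeLift (F ⟨m, h⟩) ⟨m, h⟩ (liftSeq F m X)
      else liftSeq F m X


lemma fiber_cont {N : ℕ} (n : Fin N) (Y : C((Fin N → I), ℝ)) :
    Continuous (fun y : Fin N → I => fiber Y n y) := by
  have hc : Continuous (fun p : (Fin N → I) × I => Y (Function.update p.1 n p.2)) := by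
    apply Y.continuous.comp
    apply continuous_pi
    intro k
    by_cases h : k = n
    · subst h
      simp only [Function.update_self]
      exact continuous_snd
    · simp only [Function.update_of_ne h]
      exact (continuous_apply k).comp continuous_fst
  have : (fun y : Fin N → I => fiber Y n y)
      = fun y => (ContinuousMap.mk _ hc).curry y := by
    funext y; exact ContinuousMap.ext fun t => rfl
  rw [this]
  exact (ContinuousMap.mk _ hc).curry.continuous

lemma modeLift_cont {N : ℕ} (Fn : C(I, ℝ) → C(I, ℝ)) (hFn : Continuous Fn)
    (n : Fin N) (Y : C((Fin N → I), ℝ)) :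
    Continuous (fun y => Fn (fiber Y n y) (y n)) := by
  exact continuous_eval.comp
    (((hFn.comp (fiber_cont n Y))).prodMk (continuous_apply n))

lemma fiber_norm_le {N : ℕ} (n : Fin N) (Y : C((Fin N → I), ℝ)) (y : Fin N → I) :
    ‖fiber Y n y‖ ≤ ‖Y‖ := by
  apply (ContinuousMap.norm_le _ (norm_nonneg Y)).2
  intro t
  exact Y.norm_coe_le_norm _

lemma modeLift_dist {N : ℕ} (Fn : C(I, ℝ) → C(I, ℝ)) (hFn : Continuous Fn)
    (n : Fin N) (Y : C((Fin N → I), ℝ)) (δ : ℝ) (hδ : 0 ≤ δ)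
    (h : ∀ u : C(I, ℝ), ‖Fn u - u‖ ≤ δ * ‖u‖) :
    ‖modeLift Fn n Y - Y‖ ≤ δ * ‖Y‖ := by
  rw [modeLift, dif_pos (modeLift_cont Fn hFn n Y)]
  apply (ContinuousMap.norm_le _ (mul_nonneg hδ (norm_nonneg Y))).2
  intro y
  have hYy : Y y = fiber Y n y (y n) := by
    simp [fiber, Function.update_eq_self]
  have h1 : ‖(Fn (fiber Y n y) - fiber Y n y) (y n)‖ ≤ δ * ‖fiber Y n y‖ :=
    le_trans ((Fn (fiber Y n y) - fiber Y n y).norm_coe_le_norm _) (h _)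
  simp only [ContinuousMap.sub_apply, ContinuousMap.coe_mk] at h1 ⊢
  rw [hYy]
  exact h1.trans (mul_le_mul_of_nonneg_left (fiber_norm_le n Y y) hδ)

/-- universal approximation for NO-CTR (abstract form).
Given `𝒳 ∈ C([0,1]^N)` and `ε > 0`, suppose the core function `𝒢` satisfies
`‖𝒳 − 𝒢‖_∞ < ε/2` and `‖𝒢‖_∞ ≤ M`, and the operators `F₁,…,F_N` are within
`δ = ε/((2^{N+1} − 2)M)` of the identity (`‖Fₙ(u) − u‖_∞ ≤ δ‖u‖_∞`, as in the
paper's bound `‖Fₙ − I‖ ≤ δ`), with each induced mode-n operator norm-bounded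
by 2. Then `‖𝒳 − 𝓕_N⁽ᴺ⁾ ∘ ⋯ ∘ 𝓕₁⁽¹⁾(𝒢)‖_∞ < ε`. -/
theorem universal_approximation {N : ℕ} (hN : 1 ≤ N) (ε M : ℝ) (hε : 0 < ε)
    (hM : 0 < M) (X G : C((Fin N → I), ℝ))
    (hXG : ‖X - G‖ < ε / 2) (hGM : ‖G‖ ≤ M)
    (F : Fin N → (C(I, ℝ) → C(I, ℝ)))
    (hFc : ∀ n, Continuous (F n))
    (hFδ : ∀ (n : Fin N) (u : C(I, ℝ)),
      ‖F n u - u‖ ≤ (ε / ((2 ^ (N + 1) - 2) * M)) * ‖u‖)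
    (hFbd : ∀ (n : Fin N) (Y : C((Fin N → I), ℝ)),
      ‖modeLift (F n) n Y‖ ≤ 2 * ‖Y‖) :
    ‖X - liftSeq F N G‖ < ε := by
  set δ : ℝ := ε / ((2 ^ (N + 1) - 2) * M) with hδdef
  have h2N : (2:ℝ) ≤ 2 ^ N := by
    calc (2:ℝ) = 2 ^ 1 := (pow_one 2).symm
    _ ≤ 2 ^ N := pow_le_pow_right₀ one_le_two hN
  have h2N1 : (2:ℝ) ≤ 2 ^ (N + 1) := by
    calc (2:ℝ) = 2 ^ 1 := (pow_one 2).symm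
    _ ≤ 2 ^ (N + 1) := pow_le_pow_right₀ one_le_two (by omega)
  have hδ0 : 0 ≤ δ := by
    apply div_nonneg hε.le
    apply mul_nonneg (by linarith) hM.le
  have key : ∀ m, m ≤ N → ‖liftSeq F m G‖ ≤ 2 ^ m * M ∧
      ‖G - liftSeq F m G‖ ≤ δ * M * (2 ^ m - 1) := by
    intro m
    induction m with
    | zero => intro _; constructor <;> simp [liftSeq, hGM]
    | succ m ih =>
      intro hm
      have hmN : m < N := by omega
      obtain ⟨ih1, ih2⟩ := ih (by omega)
      have heq : liftSeq F (m + 1) G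
          = modeLift (F ⟨m, hmN⟩) ⟨m, hmN⟩ (liftSeq F m G) := by
        simp only [liftSeq]
        rw [dif_pos hmN]
      constructor
      · rw [heq]
        calc ‖modeLift (F ⟨m, hmN⟩) ⟨m, hmN⟩ (liftSeq F m G)‖
            ≤ 2 * ‖liftSeq F m G‖ := hFbd _ _
          _ ≤ 2 * (2 ^ m * M) := by linarith
          _ = 2 ^ (m + 1) * M := by ring
      · have hstep : ‖liftSeq F (m + 1) G - liftSeq F m G‖ ≤ δ * ‖liftSeq F m G‖ := by
          rw [heq]
          exact modeLift_dist _ (hFc _) _ _ δ hδ0 (hFδ _)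
        calc ‖G - liftSeq F (m + 1) G‖
            ≤ ‖G - liftSeq F m G‖ + ‖liftSeq F (m + 1) G - liftSeq F m G‖ := by
              rw [← norm_neg (liftSeq F (m + 1) G - liftSeq F m G)]
              convert norm_add_le _ _ using 2
              · rfl
              · abel
          _ ≤ δ * M * (2 ^ m - 1) + δ * ‖liftSeq F m G‖ := by linarith
          _ ≤ δ * M * (2 ^ m - 1) + δ * (2 ^ m * M) :=
              by nlinarith [mul_le_mul_of_nonneg_left ih1 hδ0]
          _ = δ * M * (2 ^ (m + 1) - 1) := by ring
  obtain ⟨-, hG⟩ := key N le_rfl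
  have h2 : (2:ℝ) ^ (N + 1) - 2 = 2 * (2 ^ N - 1) := by ring
  have hne : (2:ℝ) ^ N - 1 ≠ 0 := by linarith
  have hMne : M ≠ 0 := hM.ne'
  have hfin : δ * M * (2 ^ N - 1) = ε / 2 := by
    rw [hδdef, h2]
    field_simp
  calc ‖X - liftSeq F N G‖ ≤ ‖X - G‖ + ‖G - liftSeq F N G‖ := by
        convert norm_add_le _ _ using 2 <;> [rfl; abel]
    _ < ε / 2 + ε / 2 := by linarith
    _ = ε := by ring
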